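/- arXiv:2310.04048 — 7 statements merged into one kernel-verified Lean document; each statement's English description precedes it below -/
import Mathlib

section
/- Suppose q ∈ K is a primitive l-th root of unity with l ≥ 2. In the rank-one quantized Weyl algebra A₁^q with z := 1 + (q-1)yx, one has the identity z^l = 1 + q^{l(l-1)/2}(q-1)^l · y^l x^l. -/
/-!
In any algebra where `x * y = q • (y * x) + 1`, the element `z = 1 + (q - 1) • (y * x)`
satisfies `z * y = q • (y * z)`, so left multiplication by `z` sends the normally ordered
element `∑ cₖ yᵏ xᵏ` attached to a polynomial `p = ∑ cₖ Xᵏ` to the one attached to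
`(1 + (q - 1) X) · p(qX)`. Hence `zⁿ` is attached to the q-Pochhammer product
`∏_{i<n} (1 + (q - 1) qⁱ X)`. When `q` is a primitive `l`-th root of unity, this product for
`n = l` is invariant under `X ↦ qX`, which kills every coefficient strictly between `0` and `l`;
the extreme ones are `1` and `q^(l(l-1)/2) (q - 1)^l`.
-/

noncomputable section

/-- Relation defining the rank-one quantized Weyl algebra: x*y - q*(y*x) = 1. -/
inductive WeylRel (K : Type*) [Field K] (q : K) :
    FreeAlgebra K (Fin 2) → FreeAlgebra K (Fin 2) → Prop
  | rel : WeylRel K q (FreeAlgebra.ι K (0 : Fin 2) * FreeAlgebra.ι K 1 -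
      algebraMap K _ q * (FreeAlgebra.ι K 1 * FreeAlgebra.ι K 0)) 1

/-- The rank-one quantized Weyl algebra A₁^q. -/
abbrev Weyl (K : Type*) [Field K] (q : K) := RingQuot (WeylRel K q)

/-- The generator x of A₁^q. -/
def wx (K : Type*) [Field K] (q : K) : Weyl K q :=
  RingQuot.mkAlgHom K (WeylRel K q) (FreeAlgebra.ι K 0)

/-- The generator y of A₁^q. -/
def wy (K : Type*) [Field K] (q : K) : Weyl K q :=
  RingQuot.mkAlgHom K (WeylRel K q) (FreeAlgebra.ι K 1)

open Polynomial Finset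

namespace Polynomial

section IsDomain

variable {R : Type*} [CommRing R] [IsDomain R]

lemma coeff_eq_zero_of_comp_C_mul_X_eq {ζ : R} {l k : ℕ} (hζ : IsPrimitiveRoot ζ l)
    (hk₀ : 0 < k) (hkl : k < l) {p : R[X]} (h : p.comp (C ζ * X) = p) : p.coeff k = 0 := by
  have hk : p.coeff k * (ζ ^ k - 1) = 0 := by
    rw [mul_sub, mul_one, sub_eq_zero, ← comp_C_mul_X_coeff, h]
  exact (mul_eq_zero.1 hk).resolve_right (sub_ne_zero.2 (hζ.pow_ne_one_of_pos_of_lt hk₀.ne' hkl))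

lemma eq_C_add_C_mul_X_pow_of_comp_C_mul_X_eq {ζ : R} {l : ℕ} (hζ : IsPrimitiveRoot ζ l)
    (hl : 0 < l) {p : R[X]} (hp : p.natDegree ≤ l) (h : p.comp (C ζ * X) = p) :
    p = C (p.coeff 0) + C (p.coeff l) * X ^ l := by
  ext k
  rw [coeff_add, coeff_C, coeff_C_mul_X_pow]
  rcases Nat.eq_zero_or_pos k with rfl | hk₀
  · simp [hl.ne]
  rcases lt_trichotomy k l with hkl | rfl | hkl
  · simp [hk₀.ne', hkl.ne, coeff_eq_zero_of_comp_C_mul_X_eq hζ hk₀ hkl h]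
  · simp [hk₀.ne']
  · simp [hk₀.ne', hkl.ne', coeff_eq_zero_of_natDegree_lt (hp.trans_lt hkl)]

end IsDomain

variable {K : Type*} [CommRing K]

lemma natDegree_one_add_C_mul_X_le (b : K) : (1 + C b * X).natDegree ≤ 1 := by
  simpa [add_comm] using natDegree_linear_le (a := b) (b := 1)

/-- `(-aX; q)_n`, whose coefficients are `a^k q^(k(k-1)/2)` times the Gaussian binomials. -/
def qPochhammer (a q : K) (n : ℕ) : K[X] := ∏ i ∈ range n, (1 + C (a * q ^ i) * X)

variable (a q : K)

lemma qPochhammer_succ (n : ℕ) :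
    qPochhammer a q (n + 1) = qPochhammer a q n * (1 + C (a * q ^ n) * X) :=
  prod_range_succ _ n

lemma qPochhammer_succ' (n : ℕ) :
    qPochhammer a q (n + 1) = (1 + C a * X) * (qPochhammer a q n).comp (C q * X) := by
  rw [qPochhammer, prod_range_succ', qPochhammer, Polynomial.prod_comp, mul_comm]
  congr 1
  · simp
  · refine prod_congr rfl fun i _ => ?_
    simp only [add_comp, one_comp, mul_comp, C_comp, X_comp, pow_succ, map_mul]
    ring

lemma qPochhammer_comp_of_pow_eq_one [IsDomain K] {n : ℕ} (hq : q ^ n = 1) :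
    (qPochhammer a q n).comp (C q * X) = qPochhammer a q n := by
  have h1 : (1 + C a * X : K[X]) ≠ 0 := fun h => by simpa using congrArg (coeff · 0) h
  apply mul_left_cancel₀ h1
  rw [← qPochhammer_succ', qPochhammer_succ, hq, mul_one, mul_comm]

lemma qPochhammer_coeff_zero (n : ℕ) : (qPochhammer a q n).coeff 0 = 1 := by
  simp [qPochhammer, coeff_zero_eq_eval_zero, eval_prod]

lemma natDegree_qPochhammer_le (n : ℕ) : (qPochhammer a q n).natDegree ≤ n :=
  (natDegree_prod_le _ _).trans <| (sum_le_card_nsmul _ _ 1 fun i _ =>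
    natDegree_one_add_C_mul_X_le _).trans (by simp)

lemma qPochhammer_coeff_self (n : ℕ) :
    (qPochhammer a q n).coeff n = q ^ (n * (n - 1) / 2) * a ^ n := by
  have h := coeff_prod_of_natDegree_le (range n) (fun i => 1 + C (a * q ^ i) * X) 1
    fun i _ => natDegree_one_add_C_mul_X_le _
  rw [card_range, mul_one] at h
  simp only [qPochhammer, h, coeff_add, coeff_one, coeff_C_mul_X, one_ne_zero, if_false,
    if_true, zero_add]
  rw [prod_mul_distrib, prod_const, card_range, prod_pow_eq_pow_sum, sum_range_id, mul_comm]

lemma qPochhammer_of_isPrimitiveRoot [IsDomain K] {l : ℕ} (hq : IsPrimitiveRoot q l)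
    (hl : 0 < l) : qPochhammer a q l = 1 + C (q ^ (l * (l - 1) / 2) * a ^ l) * X ^ l := by
  rw [eq_C_add_C_mul_X_pow_of_comp_C_mul_X_eq hq hl (natDegree_qPochhammer_le a q l)
    (qPochhammer_comp_of_pow_eq_one a q hq.pow_eq_one), qPochhammer_coeff_zero,
    qPochhammer_coeff_self, C_1]

end Polynomial

section WeylZ

variable {K A : Type*} [CommRing K] [Ring A] [Algebra K A]

def normalOrdered (x y : A) : K[X] →ₗ[K] A :=
  lsum fun k => LinearMap.toSpanSingleton K A (y ^ k * x ^ k)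

lemma normalOrdered_monomial (x y : A) (k : ℕ) (c : K) :
    normalOrdered x y (monomial k c) = c • (y ^ k * x ^ k) := by
  simp [normalOrdered]

lemma normalOrdered_one (x y : A) : normalOrdered (K := K) x y 1 = 1 := by
  rw [← monomial_zero_one, normalOrdered_monomial, pow_zero, pow_zero, mul_one, one_smul]

def weylZ (q : K) (x y : A) : A := 1 + (q - 1) • (y * x)

variable {q : K} {x y : A}

lemma weylZ_mul_right (hxy : x * y = q • (y * x) + 1) :
    weylZ q x y * y = q • (y * weylZ q x y) := by
  simp only [weylZ, add_mul, one_mul, mul_assoc, hxy, mul_add, mul_one, mul_smul_comm,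
    smul_mul_assoc, smul_add, smul_smul]
  module

lemma weylZ_mul_pow_right (hxy : x * y = q • (y * x) + 1) (k : ℕ) :
    weylZ q x y * y ^ k = q ^ k • (y ^ k * weylZ q x y) := by
  induction k with
  | zero => simp
  | succ k ih =>
    rw [pow_succ, ← mul_assoc, ih, smul_mul_assoc, mul_assoc, weylZ_mul_right hxy,
      mul_smul_comm, smul_smul, ← mul_assoc, ← pow_succ, ← pow_succ]

lemma weylZ_mul_pow_mul_pow (hxy : x * y = q • (y * x) + 1) (k : ℕ) :
    weylZ q x y * (y ^ k * x ^ k) =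
      q ^ k • (y ^ k * x ^ k) + (q ^ k * (q - 1)) • (y ^ (k + 1) * x ^ (k + 1)) := by
  rw [← mul_assoc, weylZ_mul_pow_right hxy, smul_mul_assoc, mul_assoc]
  simp only [weylZ, add_mul, mul_add, one_mul, smul_mul_assoc, mul_smul_comm,
    smul_add, smul_smul, pow_succ y, pow_succ' x, mul_assoc]

lemma weylZ_mul_normalOrdered (hxy : x * y = q • (y * x) + 1) (p : K[X]) :
    weylZ q x y * normalOrdered x y p =
      normalOrdered x y ((1 + C (q - 1) * X) * p.comp (C q * X)) := by
  induction p using Polynomial.induction_on' with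
  | add p r hp hr => rw [map_add, mul_add, hp, hr, add_comp, mul_add, map_add]
  | monomial k c =>
    have hpoly : (1 + C (q - 1) * X) * (monomial k c).comp (C q * X) =
        monomial k (c * q ^ k) + monomial (k + 1) (c * q ^ k * (q - 1)) := by
      simp only [← C_mul_X_pow_eq_monomial, C_mul_comp, X_pow_comp, mul_pow, ← C_pow, C_mul,
        pow_succ]
      ring
    rw [hpoly, map_add, normalOrdered_monomial, normalOrdered_monomial, normalOrdered_monomial,
      mul_smul_comm, weylZ_mul_pow_mul_pow hxy, smul_add, smul_smul, smul_smul, mul_assoc]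

lemma weylZ_pow (hxy : x * y = q • (y * x) + 1) (n : ℕ) :
    weylZ q x y ^ n = normalOrdered x y (qPochhammer (q - 1) q n) := by
  induction n with
  | zero => rw [pow_zero, qPochhammer, prod_range_zero, normalOrdered_one]
  | succ n ih => rw [pow_succ', ih, weylZ_mul_normalOrdered hxy, qPochhammer_succ']

lemma weylZ_pow_of_isPrimitiveRoot [IsDomain K] (hxy : x * y = q • (y * x) + 1) {l : ℕ}
    (hq : IsPrimitiveRoot q l) (hl : 0 < l) :
    weylZ q x y ^ l = 1 + (q ^ (l * (l - 1) / 2) * (q - 1) ^ l) • (y ^ l * x ^ l) := by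
  rw [weylZ_pow hxy, qPochhammer_of_isPrimitiveRoot _ _ hq hl, map_add, normalOrdered_one,
    C_mul_X_pow_eq_monomial, normalOrdered_monomial]

end WeylZ

lemma wx_mul_wy (K : Type*) [Field K] (q : K) : wx K q * wy K q = q • (wy K q * wx K q) + 1 := by
  have h := RingQuot.mkAlgHom_rel K (WeylRel.rel (K := K) (q := q))
  rw [map_sub, map_mul, map_mul, map_mul, AlgHom.commutes, map_one, sub_eq_iff_eq_add'] at h
  rw [wx, wy, h, Algebra.smul_def]

/-- If q is a primitive l-th root of unity (l ≥ 2), then in A₁^q with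
z := 1 + (q-1)yx one has z^l = 1 + q^{l(l-1)/2}(q-1)^l · y^l x^l. -/
theorem weyl_zl (K : Type*) [Field K] (q : K) (l : ℕ) (hl : 2 ≤ l)
    (hq : IsPrimitiveRoot q l) :
    ((1 : Weyl K q) + (q - 1) • (wy K q * wx K q)) ^ l =
      1 + (q ^ (l * (l - 1) / 2) * (q - 1) ^ l) • (wy K q ^ l * wx K q ^ l) :=
  weylZ_pow_of_isPrimitiveRoot (wx_mul_wy K q) hq (by omega)
end
end

section
/- If R is a ring that is a finitely generated module over a commutative subring, then R satisfies a polynomial identity (i.e., there is a monic multilinear polynomial f in noncommuting variables over ℤ with f(r₁,…,r_k) = 0 for all r_i ∈ R). -/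
private lemma ofFn_reverse {α : Type*} {k : ℕ} (f : Fin k → α) :
    (List.ofFn f).reverse = List.ofFn (fun i => f i.rev) := by
  apply List.ext_getElem
  · simp
  · intro i h1 h2
    simp only [List.getElem_reverse, List.getElem_ofFn, List.length_reverse, List.length_ofFn]
    congr 1
    ext
    simp only [Fin.rev]
    simp at h1 h2 ⊢
    omega

private lemma alt_vanish {C M N ι κ : Type*} [CommRing C] [AddCommGroup M] [AddCommGroup N]
    [Module C M] [Module C N] [Fintype ι] [DecidableEq ι] [Fintype κ] [DecidableEq κ]
    (e : κ → M) (he : ∀ x : M, ∃ a : κ → C, ∑ p, a p • e p = x)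
    (hk : Fintype.card κ < Fintype.card ι)
    (f : AlternatingMap C M N ι) (v : ι → M) : f v = 0 := by
  choose a ha using fun i => he (v i)
  have h1 : f v = f.toMultilinearMap (fun i => ∑ p, a i p • e p) := by
    show f v = f (fun i => ∑ p, a i p • e p)
    congr 1; funext i; exact (ha i).symm
  rw [h1, MultilinearMap.map_sum]
  refine Finset.sum_eq_zero fun t _ => ?_
  rw [MultilinearMap.map_smul_univ]
  obtain ⟨i, j, hij, hr⟩ := Fintype.exists_ne_map_eq_of_card_lt t hk
  have h2 : f.toMultilinearMap (fun i => e (t i)) = f (fun i => e (t i)) := rfl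
  rw [h2, f.map_eq_zero_of_eq (fun i => e (t i)) (congrArg e hr) hij, smul_zero]

private lemma matrix_std_rev {C : Type*} [CommRing C] {n k : ℕ} (hk : n * n < k)
    (w : Fin k → Matrix (Fin n) (Fin n) C) :
    ∑ σ : Equiv.Perm (Fin k), ((Equiv.Perm.sign (σ * Fin.revPerm) : ℤ)) •
      ((List.ofFn fun i => w (σ i)).reverse).prod = 0 := by
  classical
  set g : Equiv.Perm (Fin k) → Matrix (Fin n) (Fin n) C :=
    fun τ => ((Equiv.Perm.sign τ : ℤ)) • (List.ofFn fun i => w (τ i)).prod with hg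
  have hrev : ∀ i : Fin k, (Fin.revPerm : Equiv.Perm (Fin k)) i = i.rev := fun _ => rfl
  have step1 : ∀ σ : Equiv.Perm (Fin k),
      ((Equiv.Perm.sign (σ * Fin.revPerm) : ℤ)) •
        ((List.ofFn fun i => w (σ i)).reverse).prod
      = g ((Equiv.mulRight (Fin.revPerm : Equiv.Perm (Fin k))) σ) := by
    intro σ
    rw [hg]
    simp only [Equiv.coe_mulRight]
    congr 1
    rw [ofFn_reverse]
    refine congrArg List.prod (congrArg List.ofFn (funext fun i => ?_))
    rw [Equiv.Perm.mul_apply, hrev]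
  rw [Finset.sum_congr rfl fun σ _ => step1 σ,
    Equiv.sum_comp (Equiv.mulRight (Fin.revPerm : Equiv.Perm (Fin k))) g]
  have step3 : ∑ τ : Equiv.Perm (Fin k), g τ
      = (MultilinearMap.alternatization
          (MultilinearMap.mkPiAlgebraFin C k (Matrix (Fin n) (Fin n) C))) w := by
    rw [MultilinearMap.alternatization_apply]
    refine Finset.sum_congr rfl fun τ _ => ?_
    rw [hg, MultilinearMap.domDomCongr_apply, MultilinearMap.mkPiAlgebraFin_apply,
      Units.smul_def]
  rw [step3]
  refine alt_vanish (fun p : Fin n × Fin n => Matrix.single p.1 p.2 (1 : C))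
    (fun x => ⟨fun p => x p.1 p.2, ?_⟩) (by simpa using hk) _ w
  rw [Fintype.sum_prod_type]
  conv_rhs => rw [Matrix.matrix_eq_sum_single x]
  refine Finset.sum_congr rfl fun i _ => Finset.sum_congr rfl fun j _ => ?_
  rw [Matrix.smul_single, smul_eq_mul, mul_one]


/-- If a ring R is a finitely generated module over a commutative subring, then
R satisfies a monic multilinear polynomial identity over ℤ. -/
theorem pi_of_finite_over_commutative (R : Type*) [Ring R] (C : Subring R)
    (hC : ∀ a b : C, a * b = b * a) [Module.Finite C R] :
    ∃ k : ℕ, 0 < k ∧ ∃ c : Equiv.Perm (Fin k) → ℤ,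
      (∃ σ₀ : Equiv.Perm (Fin k), c σ₀ = 1) ∧
      ∀ r : Fin k → R,
        ∑ σ : Equiv.Perm (Fin k), c σ • (List.ofFn fun i => r (σ i)).prod = 0 := by
  classical
  obtain ⟨n, m, hm⟩ := Module.Finite.exists_fin (R := C) (M := R)
  have hmem : ∀ x : R, ∃ a : Fin n → C, ∑ i, a i • m i = x := by
    intro x
    have hx : x ∈ Submodule.span C (Set.range m) := hm ▸ Submodule.mem_top
    exact (Submodule.mem_span_range_iff_exists_fun _).mp hx
  choose A hA using fun r => fun j => hmem (m j * r)
  -- A : R → Fin n → Fin n → C ;  hA r j : ∑ i, A r j i • m i = m j * r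
  letI : CommRing C := { (inferInstance : Ring C) with mul_comm := hC }
  set Am : R → Matrix (Fin n) (Fin n) C := fun r => Matrix.of fun i j => A r j i with hAm
  have hAm' : ∀ (r : R) (j : Fin n), m j * r = ∑ i, (Am r) i j • m i := by
    intro r j; rw [← hA r j]; rfl
  set k := n * n + 1 with hk
  refine ⟨k, Nat.succ_pos _,
    fun σ => ((Equiv.Perm.sign (σ * Fin.revPerm) : ℤ)), ⟨Fin.revPerm, ?_⟩, ?_⟩
  · have h1 : (Fin.revPerm : Equiv.Perm (Fin k)) * Fin.revPerm = 1 := by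
      ext i
      show ((i.rev).rev).val = i.val
      rw [Fin.rev_rev]
    show ((Equiv.Perm.sign ((Fin.revPerm : Equiv.Perm (Fin k)) * Fin.revPerm) : ℤ)) = 1
    rw [h1, map_one, Units.val_one]
  · intro r
    show ∑ σ : Equiv.Perm (Fin k), ((Equiv.Perm.sign (σ * Fin.revPerm) : ℤ)) •
      (List.ofFn fun i => r (σ i)).prod = 0
    have key : ∀ (L : List R) (j : Fin n),
        m j * L.prod = ∑ i, ((L.map Am).reverse.prod) i j • m i := by
      intro L
      induction L with
      | nil =>
        intro j
        simp only [List.prod_nil, mul_one, List.map_nil, List.reverse_nil, Matrix.one_apply]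
        have hone : ∀ i : Fin n, (if i = j then (1 : C) else 0) • m i
            = if i = j then m i else 0 := by
          intro i; split <;> simp
        rw [Finset.sum_congr rfl fun i _ => hone i,
          Finset.sum_ite_eq' Finset.univ j m, if_pos (Finset.mem_univ j)]
      | cons r L ih =>
        intro j
        rw [List.prod_cons, ← mul_assoc, hAm' r j, Finset.sum_mul]
        have h2 : ∀ i : Fin n, ((Am r) i j • m i) * L.prod
            = ∑ l, ((Am r) i j * ((L.map Am).reverse.prod) l i) • m l := by
          intro i
          rw [smul_mul_assoc, ih i, Finset.smul_sum]
          exact Finset.sum_congr rfl fun l _ => smul_smul _ _ _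
        rw [Finset.sum_congr rfl fun i _ => h2 i, Finset.sum_comm]
        have h3 : ((r :: L).map Am).reverse.prod = (L.map Am).reverse.prod * Am r := by
          rw [List.map_cons, List.reverse_cons, List.prod_append, List.prod_cons,
            List.prod_nil, mul_one]
        rw [h3]
        refine Finset.sum_congr rfl fun l _ => ?_
        rw [← Finset.sum_smul]
        congr 1
        rw [Matrix.mul_apply]
        exact Finset.sum_congr rfl fun i _ => hC _ _
    set t : R := ∑ σ : Equiv.Perm (Fin k),
      ((Equiv.Perm.sign (σ * Fin.revPerm) : ℤ)) • (List.ofFn fun i => r (σ i)).prod with ht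
    have hmt : ∀ j : Fin n, m j * t = 0 := by
      intro j
      rw [ht, Finset.mul_sum]
      have h4 : ∀ σ : Equiv.Perm (Fin k),
          m j * (((Equiv.Perm.sign (σ * Fin.revPerm) : ℤ)) •
            (List.ofFn fun i => r (σ i)).prod)
          = ∑ i, (((Equiv.Perm.sign (σ * Fin.revPerm) : ℤ)) •
              (((List.ofFn fun i => r (σ i)).map Am).reverse.prod)) i j • m i := by
        intro σ
        rw [mul_smul_comm, key, Finset.smul_sum]
        refine Finset.sum_congr rfl fun i _ => ?_
        rw [← smul_assoc]
        rfl
      rw [Finset.sum_congr rfl fun σ _ => h4 σ, Finset.sum_comm]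
      have h5 : ∀ i : Fin n,
          ∑ σ : Equiv.Perm (Fin k), (((Equiv.Perm.sign (σ * Fin.revPerm) : ℤ)) •
              (((List.ofFn fun i => r (σ i)).map Am).reverse.prod)) i j • m i
          = ((∑ σ : Equiv.Perm (Fin k), ((Equiv.Perm.sign (σ * Fin.revPerm) : ℤ)) •
              ((List.ofFn fun i' => Am (r (σ i'))).reverse.prod)) i j) • m i := by
        intro i
        rw [Matrix.sum_apply, Finset.sum_smul]
        refine Finset.sum_congr rfl fun σ _ => ?_
        congr 2
        rw [List.map_ofFn]
        rfl
      rw [Finset.sum_congr rfl fun i _ => h5 i]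
      rw [matrix_std_rev (by omega) (fun i => Am (r i))]
      simp
    obtain ⟨a, ha⟩ := hmem 1
    calc t = 1 * t := (one_mul t).symm
    _ = (∑ i, a i • m i) * t := by rw [ha]
    _ = ∑ i, a i • (m i * t) := by
        rw [Finset.sum_mul]
        exact Finset.sum_congr rfl fun i _ => smul_mul_assoc _ _ _
    _ = 0 := by
        rw [Finset.sum_congr rfl fun i _ => by rw [hmt i, smul_zero]]
        exact Finset.sum_const_zero
end

section
/- Let q be a primitive m-th root of unity in a field K and let H = (h_{ij}) be a skew-symmetric n×n integer matrix whose invariant factors (each occurring twice) are h₁, h₁, …, h_s, h_s. Then the cardinality of the image of the composite map ℤⁿ →^H ℤⁿ → (ℤ/mℤ)ⁿ is ∏_{i=1}^{s} (m / gcd(h_i, m))². -/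
noncomputable section
open Matrix

/-- Extend a finite family of integers by zero. -/
def extZ {s : ℕ} (h : Fin s → ℤ) (k : ℕ) : ℤ :=
  if hk : k < s then h ⟨k, hk⟩ else 0

/-- The n×n block-diagonal skew-symmetric integer matrix with 2×2 blocks
((0, h_i), (-h_i, 0)) for i < s, followed by zeros. -/
def skewBlockMat (n s : ℕ) (h : Fin s → ℤ) : Matrix (Fin n) (Fin n) ℤ :=
  Matrix.of fun i j =>
    if (j : ℕ) = (i : ℕ) + 1 ∧ (i : ℕ) % 2 = 0 then extZ h ((i : ℕ) / 2)
    else if (i : ℕ) = (j : ℕ) + 1 ∧ (j : ℕ) % 2 = 0 then -extZ h ((j : ℕ) / 2)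
    else 0

private lemma prod_double {M : Type*} [CommMonoid M] (s : ℕ) (d : ℕ → M) :
    ∏ i ∈ Finset.range (2 * s), d (i / 2) = ∏ i ∈ Finset.range s, d i ^ 2 := by
  induction s with
  | zero => simp
  | succ k ih =>
      have h1 : 2 * (k + 1) = (2 * k) + 1 + 1 := by ring
      rw [h1, Finset.prod_range_succ, Finset.prod_range_succ, Finset.prod_range_succ, ih]
      have e1 : (2 * k) / 2 = k := by omega
      have e2 : (2 * k + 1) / 2 = k := by omega
      rw [e1, e2, sq, mul_assoc]

private lemma card_range_mul (m : ℕ) [NeZero m] (a : ℤ) :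
    Nat.card (Set.range fun x : ZMod m => (a : ZMod m) * x) = m / Nat.gcd a.natAbs m := by
  have hm : m ≠ 0 := NeZero.ne m
  have hset : (Set.range fun x : ZMod m => (a : ZMod m) * x)
      = (AddSubgroup.zmultiples ((a : ZMod m)) : Set (ZMod m)) := by
    ext y
    constructor
    · rintro ⟨x, rfl⟩
      obtain ⟨k, rfl⟩ := ZMod.intCast_surjective x
      exact ⟨k, by simp [zsmul_eq_mul, mul_comm]⟩
    · rintro ⟨k, rfl⟩
      exact ⟨(k : ZMod m), by simp [zsmul_eq_mul, mul_comm]⟩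
  rw [hset]
  rw [SetLike.coe_sort_coe, Nat.card_zmultiples]
  rcases Int.natAbs_eq a with he | he
  · rw [he, Int.cast_natCast, Int.natAbs_natCast, ZMod.addOrderOf_coe _ hm, Nat.gcd_comm]
  · rw [he, Int.cast_neg, Int.cast_natCast, addOrderOf_neg, Int.natAbs_neg, Int.natAbs_natCast,
      ZMod.addOrderOf_coe _ hm, Nat.gcd_comm]

/-- The companion evaluation defining the single nonzero interaction of each row. -/
private def evalSkew {m n : ℕ} (v : Fin n → ZMod m) (i : Fin n) : ZMod m :=
  if (i : ℕ) % 2 = 0 then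
    (if h1 : (i : ℕ) + 1 < n then v ⟨(i : ℕ) + 1, h1⟩ else 0)
  else -v ⟨(i : ℕ) - 1, (Nat.sub_le _ _).trans_lt i.isLt⟩

private lemma mulVec_skew {m n s : ℕ} (h : Fin s → ℤ) (v : Fin n → ZMod m) (i : Fin n) :
    ((skewBlockMat n s h).map (Int.cast : ℤ → ZMod m)).mulVec v i
      = ((extZ h ((i : ℕ) / 2) : ℤ) : ZMod m) * evalSkew v i := by
  simp only [Matrix.mulVec, dotProduct, Matrix.map_apply]
  by_cases hpar : (i : ℕ) % 2 = 0
  · by_cases h1 : (i : ℕ) + 1 < n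
    · rw [Finset.sum_eq_single (⟨(i : ℕ) + 1, h1⟩ : Fin n)]
      · have : (skewBlockMat n s h) i ⟨(i : ℕ) + 1, h1⟩ = extZ h ((i : ℕ) / 2) := by
          simp [skewBlockMat, hpar]
        rw [this, evalSkew, if_pos hpar, dif_pos h1]
      · intro j _ hj
        have hj' : (j : ℕ) ≠ (i : ℕ) + 1 := by
          intro hc
          exact hj (by ext; simp [hc])
        have hz : (skewBlockMat n s h) i j = 0 := by
          simp only [skewBlockMat, Matrix.of_apply]
          rw [if_neg, if_neg]
          · rintro ⟨ha, hb⟩; omega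
          · rintro ⟨ha, _⟩; exact hj' ha
        rw [hz]; push_cast; ring
      · intro hmem; exact absurd (Finset.mem_univ _) hmem
    · have hz : ∀ j ∈ Finset.univ, ((skewBlockMat n s h) i j : ℤ) • (1 : ℤ) = 0 → True := fun _ _ _ => trivial
      rw [Finset.sum_eq_zero, evalSkew, if_pos hpar, dif_neg h1, mul_zero]
      intro j _
      have hz : (skewBlockMat n s h) i j = 0 := by
        simp only [skewBlockMat, Matrix.of_apply]
        rw [if_neg, if_neg]
        · rintro ⟨ha, hb⟩; omega
        · rintro ⟨ha, _⟩; omega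
      rw [hz]; push_cast; ring
  · have hi1 : (i : ℕ) - 1 < n := (Nat.sub_le _ _).trans_lt i.isLt
    rw [Finset.sum_eq_single (⟨(i : ℕ) - 1, hi1⟩ : Fin n)]
    · have : (skewBlockMat n s h) i ⟨(i : ℕ) - 1, hi1⟩ = -extZ h ((i : ℕ) / 2) := by
        simp only [skewBlockMat, Matrix.of_apply]
        rw [if_neg, if_pos]
        · have : ((i : ℕ) - 1) / 2 = (i : ℕ) / 2 := by omega
          rw [this]
        · constructor <;> omega
        · rintro ⟨ha, hb⟩; omega
      rw [this, evalSkew, if_neg hpar]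
      push_cast; ring
    · intro j _ hj
      have hj' : (j : ℕ) ≠ (i : ℕ) - 1 := by
        intro hc
        exact hj (by ext; simp [hc])
      have hz : (skewBlockMat n s h) i j = 0 := by
        simp only [skewBlockMat, Matrix.of_apply]
        rw [if_neg, if_neg]
        · rintro ⟨ha, hb⟩; omega
        · rintro ⟨ha, _⟩; omega
      rw [hz]; push_cast; ring
    · intro hmem; exact absurd (Finset.mem_univ _) hmem

/-- Let q be a primitive m-th root of unity in a field K and H a skew-symmetric
n×n integer matrix with invariant factors h₁,h₁,…,h_s,h_s (witnessed by a
unimodular W bringing H into skew normal form). Then the image of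
ℤⁿ →(H) ℤⁿ → (ℤ/mℤ)ⁿ has cardinality ∏ᵢ (m / gcd(hᵢ, m))². -/
theorem card_image_skew_matrix (K : Type*) [Field K] (q : K) (m : ℕ) (hm : 0 < m)
    (hq : IsPrimitiveRoot q m) (n s : ℕ) (hsn : 2 * s ≤ n)
    (H : Matrix (Fin n) (Fin n) ℤ) (hskew : Hᵀ = -H)
    (h : Fin s → ℤ) (hne : ∀ i, h i ≠ 0)
    (hdvd : ∀ i j : Fin s, i ≤ j → h i ∣ h j)
    (W : Matrix (Fin n) (Fin n) ℤ) (hW : IsUnit W.det)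
    (hform : W * H * Wᵀ = skewBlockMat n s h) :
    Nat.card (Set.range (fun v : Fin n → ℤ =>
        (fun i => ((H.mulVec v i : ℤ) : ZMod m)))) =
      ∏ i : Fin s, (m / Nat.gcd (h i).natAbs m) ^ 2 := by
  haveI : NeZero m := ⟨hm.ne'⟩
  set φ := Int.castRingHom (ZMod m) with hφ
  set Hb := H.map (Int.cast : ℤ → ZMod m) with hHb
  set Wb := W.map (Int.cast : ℤ → ZMod m) with hWb
  set D := (skewBlockMat n s h).map (Int.cast : ℤ → ZMod m) with hD
  -- Step 1: the range in question is the range of mulVec of Hb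
  have step1 : Set.range (fun v : Fin n → ℤ =>
      (fun i => ((H.mulVec v i : ℤ) : ZMod m))) = Set.range Hb.mulVec := by
    have key : ∀ (v : Fin n → ℤ) (i : Fin n),
        ((H.mulVec v i : ℤ) : ZMod m) = Hb.mulVec (fun j => ((v j : ℤ) : ZMod m)) i :=
      fun v i => RingHom.map_mulVec φ H v i
    ext w
    constructor
    · rintro ⟨v, rfl⟩
      exact ⟨fun j => ((v j : ℤ) : ZMod m), by funext i; exact (key v i).symm⟩
    · rintro ⟨u, rfl⟩
      choose v hv using fun j => ZMod.intCast_surjective (u j)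
      refine ⟨v, ?_⟩
      funext i
      have huv : (fun j => ((v j : ℤ) : ZMod m)) = u := funext hv
      show ((H.mulVec v i : ℤ) : ZMod m) = Hb.mulVec u i
      rw [key v i, huv]
  -- Step 2: D = Wb * Hb * Wbᵀ
  have step2 : D = Wb * Hb * Wbᵀ := by
    have key : (W * H * Wᵀ).map ⇑φ = W.map ⇑φ * H.map ⇑φ * (W.map ⇑φ)ᵀ := by
      rw [Matrix.map_mul, Matrix.map_mul, Matrix.transpose_map]
    rw [hD, ← hform]
    exact key
  -- units
  have hWdet : IsUnit Wb.det := by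
    have h1 : Wb.det = (W.map ⇑φ).det := rfl
    rw [h1, ← RingHom.mapMatrix_apply, ← RingHom.map_det]
    exact hW.map φ
  have hWbu : IsUnit Wb := (Matrix.isUnit_iff_isUnit_det _).2 hWdet
  have hWbtu : IsUnit Wbᵀ := (Matrix.isUnit_iff_isUnit_det _).2
    (by rw [Matrix.det_transpose]; exact hWdet)
  have hsurjt : Function.Surjective Wbᵀ.mulVec :=
    Matrix.mulVec_surjective_iff_isUnit.2 hWbtu
  have hinj : Function.Injective Wb.mulVec := by
    intro a b hab
    have h1 := congrArg (Wb⁻¹.mulVec) hab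
    rwa [Matrix.mulVec_mulVec, Matrix.mulVec_mulVec,
      Matrix.nonsing_inv_mul _ hWdet,
      Matrix.one_mulVec, Matrix.one_mulVec] at h1
  -- Step 3: cards of ranges agree
  have step3 : Set.range D.mulVec = Wb.mulVec '' Set.range Hb.mulVec := by
    rw [step2]
    ext w
    constructor
    · rintro ⟨v, rfl⟩
      exact ⟨Hb.mulVec (Wbᵀ.mulVec v), ⟨_, rfl⟩, by
        rw [← Matrix.mulVec_mulVec, ← Matrix.mulVec_mulVec]⟩
    · rintro ⟨u, ⟨v, rfl⟩, rfl⟩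
      obtain ⟨v', rfl⟩ := hsurjt v
      exact ⟨v', by rw [← Matrix.mulVec_mulVec, ← Matrix.mulVec_mulVec]⟩
  have cardeq : Nat.card (Set.range Hb.mulVec) = Nat.card (Set.range D.mulVec) := by
    rw [step3, Nat.card_image_of_injective hinj]
  -- Step 4: range of D.mulVec is a product set
  set c : Fin n → ZMod m := fun i => ((extZ h ((i : ℕ) / 2) : ℤ) : ZMod m) with hc
  set S : Fin n → Set (ZMod m) := fun i => Set.range fun x : ZMod m => c i * x with hS
  have hczero : ∀ i : Fin n, ¬ ((i : ℕ) + 1 < n) → (i : ℕ) % 2 = 0 → c i = 0 := by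
    intro i hlt hpar
    have : ¬ ((i : ℕ) / 2 < s) := by
      have := i.isLt
      omega
    simp [hc, extZ, this]
  have step4 : Set.range D.mulVec = Set.univ.pi S := by
    ext w
    constructor
    · rintro ⟨v, rfl⟩
      intro i _
      exact ⟨evalSkew v i, (mulVec_skew h v i).symm⟩
    · intro hw
      choose x hx using fun i => hw i (Set.mem_univ i)
      refine ⟨fun j => if h2 : (j : ℕ) % 2 = 0 then
          (if h1 : (j : ℕ) + 1 < n then -x ⟨(j : ℕ) + 1, h1⟩ else 0)
        else x ⟨(j : ℕ) - 1, (Nat.sub_le _ _).trans_lt j.isLt⟩, ?_⟩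
      funext i
      rw [mulVec_skew h _ i]
      by_cases hpar : (i : ℕ) % 2 = 0
      · by_cases h1 : (i : ℕ) + 1 < n
        · have he : evalSkew (fun j => if h2 : (j : ℕ) % 2 = 0 then
              (if h1 : (j : ℕ) + 1 < n then -x ⟨(j : ℕ) + 1, h1⟩ else 0)
            else x ⟨(j : ℕ) - 1, (Nat.sub_le _ _).trans_lt j.isLt⟩) i = x i := by
            rw [evalSkew, if_pos hpar, dif_pos h1]
            have hodd : ((⟨(i : ℕ) + 1, h1⟩ : Fin n) : ℕ) % 2 ≠ 0 := by simp; omega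
            rw [dif_neg hodd]
            exact congrArg x (Fin.ext (by simp))
          rw [he]
          exact hx i
        · have he : evalSkew (fun j => if h2 : (j : ℕ) % 2 = 0 then
              (if h1 : (j : ℕ) + 1 < n then -x ⟨(j : ℕ) + 1, h1⟩ else 0)
            else x ⟨(j : ℕ) - 1, (Nat.sub_le _ _).trans_lt j.isLt⟩) i = 0 := by
            rw [evalSkew, if_pos hpar, dif_neg h1]
          rw [he, mul_zero, ← hx i]
          show (0 : ZMod m) = c i * x i
          rw [hczero i h1 hpar, zero_mul]
      · have he : evalSkew (fun j => if h2 : (j : ℕ) % 2 = 0 then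
            (if h1 : (j : ℕ) + 1 < n then -x ⟨(j : ℕ) + 1, h1⟩ else 0)
          else x ⟨(j : ℕ) - 1, (Nat.sub_le _ _).trans_lt j.isLt⟩) i = x i := by
          rw [evalSkew, if_neg hpar]
          have heven : ((⟨(i : ℕ) - 1, (Nat.sub_le _ _).trans_lt i.isLt⟩ : Fin n) : ℕ) % 2 = 0 := by
            simp; omega
          rw [dif_pos heven]
          have hlt : ((⟨(i : ℕ) - 1, (Nat.sub_le _ _).trans_lt i.isLt⟩ : Fin n) : ℕ) + 1 < n := by
            have := i.isLt
            simp
            omega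
          rw [dif_pos hlt, neg_neg]
          congr 1
          ext
          have : 1 ≤ (i : ℕ) := by omega
          simp
          omega
        rw [he]
        exact hx i
  -- Step 5: card of product set
  have step5 : Nat.card (Set.univ.pi S) = ∏ i : Fin n, Nat.card (S i) := by
    rw [Nat.card_congr (Equiv.Set.univPi S), Nat.card_pi]
  -- Step 6: card of each factor
  have step6 : ∀ i : Fin n, Nat.card (S i) = m / Nat.gcd (extZ h ((i : ℕ) / 2)).natAbs m :=
    fun i => card_range_mul m _
  -- Step 7: assemble the product
  rw [step1, cardeq, step4, step5]
  calc ∏ i : Fin n, Nat.card (S i)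
      = ∏ i : Fin n, (m / Nat.gcd (extZ h ((i : ℕ) / 2)).natAbs m) := by
        exact Finset.prod_congr rfl fun i _ => step6 i
    _ = ∏ i ∈ Finset.range n, (m / Nat.gcd (extZ h (i / 2)).natAbs m) :=
        Fin.prod_univ_eq_prod_range (fun k => m / Nat.gcd (extZ h (k / 2)).natAbs m) n
    _ = ∏ i ∈ Finset.range (2 * s), (m / Nat.gcd (extZ h (i / 2)).natAbs m) := by
        symm
        apply Finset.prod_subset
        · intro i hi
          simp only [Finset.mem_range] at *
          omega
        · intro i hi hni
          simp only [Finset.mem_range] at hi hni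
          have : ¬ (i / 2 < s) := by omega
          simp [extZ, this, Nat.div_self hm]
    _ = ∏ i ∈ Finset.range s, (m / Nat.gcd (extZ h i).natAbs m) ^ 2 :=
        prod_double s (fun k => m / Nat.gcd (extZ h k).natAbs m)
    _ = ∏ i : Fin s, (m / Nat.gcd (h i).natAbs m) ^ 2 := by
        rw [← Fin.prod_univ_eq_prod_range (fun k => (m / Nat.gcd (extZ h k).natAbs m) ^ 2) s]
        apply Finset.prod_congr rfl
        intro i _
        have : extZ h (i : ℕ) = h i := by simp [extZ, i.isLt]
        rw [this]
end
end

section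
/- Let q be a primitive l-th root of unity in an algebraically closed field K, and let μ, γ ∈ K*. Define an action of the quantized Weyl algebra A₁^q (relation xy - qyx = 1) on the l-dimensional K-vector space M with basis e(0), …, e(l-1), indices read modulo l, by e(a)·x = μ·e(a+1) and e(a)·y = μ⁻¹·((q^a γ - 1)/(q - 1))·e(a-1). Then this defines a well-defined A₁^q-module structure, i.e., e(a)·(xy - q·yx) = e(a) for all a. -/
noncomputable section

/-- The right action of x on M(μ, γ): e(a)·x = μ·e(a+1). -/
def actX (K : Type*) [Field K] (l : ℕ) (μ : K) :
    (ZMod l → K) → (ZMod l → K) :=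
  fun v b => μ * v (b - 1)

/-- The right action of y on M(μ, γ): e(a)·y = μ⁻¹·((q^a γ - 1)/(q - 1))·e(a-1). -/
def actY (K : Type*) [Field K] (l : ℕ) (q μ γ : K) :
    (ZMod l → K) → (ZMod l → K) :=
  fun v b => μ⁻¹ * ((q ^ (b + 1 : ZMod l).val * γ - 1) / (q - 1)) * v (b + 1)

/-- The prescribed actions e(a)·x = μ·e(a+1),
e(a)·y = μ⁻¹·((q^a γ - 1)/(q-1))·e(a-1) on the l-dimensional space with basis
e(0),…,e(l-1) satisfy the defining relation of A₁^q:
e(a)·(xy - q·yx) = e(a) for all a. -/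
theorem weyl_module_well_defined (K : Type*) [Field K] [IsAlgClosed K]
    (l : ℕ) (hl : 2 ≤ l) (q : K) (hq : IsPrimitiveRoot q l)
    (μ γ : K) (hμ : μ ≠ 0) (hγ : γ ≠ 0) :
    ∀ a : ZMod l,
      actY K l q μ γ (actX K l μ (Pi.single a 1)) -
          q • actX K l μ (actY K l q μ γ (Pi.single a 1)) =
        Pi.single a 1 := by
  intro a
  haveI : NeZero l := ⟨by omega⟩
  have hql : q ^ l = 1 := hq.pow_eq_one
  have hq1 : q ≠ 1 := hq.ne_one (by omega)
  have hqsub : q - 1 ≠ 0 := sub_ne_zero.mpr hq1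
  have hpow : ∀ b : ZMod l, q ^ ((b + 1 : ZMod l).val) = q * q ^ b.val := by
    intro b
    have h1 : ((1 : ZMod l)).val = 1 := ZMod.val_one_eq_one_mod l ▸ by
      simp [ZMod.val_one_eq_one_mod, Nat.mod_eq_of_lt (by omega : 1 < l)]
    have : (b + 1 : ZMod l).val = (b.val + 1) % l := by
      rw [ZMod.val_add, h1]
    rw [this, ← pow_eq_pow_mod _ hql, pow_succ, mul_comm]
  funext b
  simp only [actX, actY, Pi.single_apply, Pi.sub_apply, Pi.smul_apply, smul_eq_mul]
  rcases eq_or_ne b a with rfl | hba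
  · simp only [add_sub_cancel_right, sub_add_cancel, if_pos rfl]
    rw [hpow b]
    field_simp
    ring
  · have h1 : b + 1 - 1 ≠ a := by simpa using hba
    have h2 : b - 1 + 1 ≠ a := by simpa using hba
    simp [h1, h2, hba]
end
end

section
/- Let q be a primitive l-th root of unity in an algebraically closed field K and μ, γ ∈ K*. The l-dimensional A₁^q-module M(μ, γ) with basis e(a), a ∈ ℤ/lℤ, actions e(a)·x = μ·e(a+1), e(a)·y = μ⁻¹ ((q^a γ - 1)/(q-1)) e(a-1), is a simple module: every nonzero submodule equals M(μ, γ). -/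
noncomputable section

/-- The l-dimensional module M(μ, γ) with the prescribed actions of x and y is
simple: every nonzero subspace stable under both actions is the whole space. -/
theorem weyl_module_simple (K : Type*) [Field K] [IsAlgClosed K]
    (l : ℕ) (hl : 2 ≤ l) (q : K) (hq : IsPrimitiveRoot q l)
    (μ γ : K) (hμ : μ ≠ 0) (hγ : γ ≠ 0) :
    ∀ p : Submodule K (ZMod l → K),
      (∀ v ∈ p, actX K l μ v ∈ p) → (∀ v ∈ p, actY K l q μ γ v ∈ p) →
      p ≠ ⊥ → p = ⊤ := by
  classical
  intro p hx hy hp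
  haveI : NeZero l := ⟨by omega⟩
  have hq1 : q ≠ 1 := hq.ne_one (by omega)
  have hq1' : q - 1 ≠ 0 := sub_ne_zero.mpr hq1
  set c : ZMod l → K := fun b => (q ^ (b + 1 : ZMod l).val * γ - 1) / (q - 1) with hc
  -- c is injective
  have hcinj : Function.Injective c := by
    intro a b hab
    have h1 : q ^ (a + 1 : ZMod l).val * γ - 1 = q ^ (b + 1 : ZMod l).val * γ - 1 := by
      have h := hab
      simp only [hc] at h
      rw [div_eq_div_iff hq1' hq1'] at h
      exact mul_right_cancel₀ hq1' h
    have h2 : q ^ (a + 1 : ZMod l).val = q ^ (b + 1 : ZMod l).val :=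
      mul_right_cancel₀ hγ (sub_left_inj.mp h1)
    have h3 : (a + 1 : ZMod l).val = (b + 1 : ZMod l).val :=
      hq.pow_inj (ZMod.val_lt _) (ZMod.val_lt _) h2
    have h4 : (a + 1 : ZMod l) = b + 1 := ZMod.val_injective l h3
    exact add_right_cancel h4
  -- the diagonal operator y∘x preserves p
  have hD : ∀ v ∈ p, (fun b => c b * v b) ∈ p := by
    intro v hv
    have h := hy _ (hx v hv)
    convert h using 1
    funext b
    show c b * v b = μ⁻¹ * ((q ^ (b + 1 : ZMod l).val * γ - 1) / (q - 1)) * (μ * v (b + 1 - 1))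
    rw [add_sub_cancel_right, hc]
    field_simp
  -- p contains a basis vector
  have hsingle : ∀ n : ℕ, ∀ v ∈ p, (Finset.univ.filter (v · ≠ 0)).card ≤ n →
      ∀ b, v b ≠ 0 → (Pi.single b (1 : K) : ZMod l → K) ∈ p := by
    intro n
    induction n with
    | zero =>
      intro v _ hcard b hb
      have : b ∈ Finset.univ.filter (v · ≠ 0) := Finset.mem_filter.mpr ⟨Finset.mem_univ b, hb⟩
      have := Finset.card_pos.mpr ⟨b, this⟩
      omega
    | succ n ih =>
      intro v hv hcard b hb
      by_cases hex : ∃ b', b' ≠ b ∧ v b' ≠ 0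
      · obtain ⟨b', hb'b, hb'⟩ := hex
        have hwp : ((fun a => c a * v a) - c b' • v : ZMod l → K) ∈ p :=
          p.sub_mem (hD v hv) (p.smul_mem _ hv)
        set w : ZMod l → K := (fun a => c a * v a) - c b' • v with hw
        have hwa : ∀ a, w a = (c a - c b') * v a := by
          intro a
          simp only [hw, Pi.sub_apply, Pi.smul_apply, smul_eq_mul]
          ring
        have hwb : w b ≠ 0 :=
          hwa b ▸ mul_ne_zero (sub_ne_zero.mpr (fun h => hb'b (hcinj h).symm)) hb
        have hsub : (Finset.univ.filter (w · ≠ 0)) ⊆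
            (Finset.univ.filter (v · ≠ 0)).erase b' := by
          intro a ha
          simp only [Finset.mem_filter, Finset.mem_univ, true_and] at ha
          refine Finset.mem_erase.mpr ⟨?_, Finset.mem_filter.mpr ⟨Finset.mem_univ a, ?_⟩⟩
          · rintro rfl
            exact ha (by rw [hwa]; ring)
          · intro hva
            exact ha (by rw [hwa, hva, mul_zero])
        have hb'mem : b' ∈ Finset.univ.filter (v · ≠ 0) :=
          Finset.mem_filter.mpr ⟨Finset.mem_univ b', hb'⟩
        have hcard' : (Finset.univ.filter (w · ≠ 0)).card ≤ n := by
          have h5 := Finset.card_le_card hsub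
          rw [Finset.card_erase_of_mem hb'mem] at h5
          have h6 := Finset.card_pos.mpr ⟨b', hb'mem⟩
          omega
        exact ih w hwp hcard' b hwb
      · push_neg at hex
        have hveq : (Pi.single b (1 : K) : ZMod l → K) = (v b)⁻¹ • v := by
          funext a
          by_cases ha : a = b
          · subst ha
            simp [Pi.single_apply, inv_mul_cancel₀ hb]
          · simp [Pi.single_apply, ha, hex a ha]
        rw [hveq]
        exact p.smul_mem _ hv
  -- get a nonzero vector
  obtain ⟨v, hv, hv0⟩ := (Submodule.ne_bot_iff p).mp hp
  obtain ⟨b0, hb0⟩ := Function.ne_iff.mp hv0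
  have hs0 : (Pi.single b0 (1 : K) : ZMod l → K) ∈ p :=
    hsingle (Finset.univ.filter (v · ≠ 0)).card v hv le_rfl b0 hb0
  -- x shifts basis vectors
  have hshift : ∀ a : ZMod l, (Pi.single a (1 : K) : ZMod l → K) ∈ p →
      (Pi.single (a + 1) (1 : K) : ZMod l → K) ∈ p := by
    intro a ha
    have hxp := hx _ ha
    have heq : actX K l μ (Pi.single a (1 : K)) = μ • (Pi.single (a + 1) (1 : K) : ZMod l → K) := by
      funext b
      simp only [actX, Pi.smul_apply, smul_eq_mul, Pi.single_apply]
      congr 1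
      by_cases h : b - 1 = a
      · rw [if_pos h, if_pos (by rw [← h]; ring)]
      · rw [if_neg h, if_neg (fun hb => h (by rw [hb]; ring))]
    rw [heq] at hxp
    have h7 : (Pi.single (a + 1) (1 : K) : ZMod l → K)
        = μ⁻¹ • (μ • (Pi.single (a + 1) (1 : K) : ZMod l → K)) := by
      rw [smul_smul, inv_mul_cancel₀ hμ, one_smul]
    rw [h7]
    exact p.smul_mem _ hxp
  have hall : ∀ a : ZMod l, (Pi.single a (1 : K) : ZMod l → K) ∈ p := by
    have key : ∀ k : ℕ, (Pi.single (b0 + (k : ZMod l)) (1 : K) : ZMod l → K) ∈ p := by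
      intro k
      induction k with
      | zero => simpa using hs0
      | succ k ih =>
        have h8 := hshift _ ih
        rwa [show ((k + 1 : ℕ) : ZMod l) = (k : ZMod l) + 1 by push_cast; ring, ← add_assoc]
    intro a
    have h9 := key (a - b0).val
    rwa [ZMod.natCast_zmod_val, add_sub_cancel] at h9
  -- conclude
  rw [eq_top_iff]
  intro u _
  rw [pi_eq_sum_univ u]
  refine Submodule.sum_mem p (fun a _ => Submodule.smul_mem p _ ?_)
  have h10 : (fun j => if a = j then (1 : K) else 0) = (Pi.single a (1 : K) : ZMod l → K) := by
    funext j; rw [Pi.single_apply]; exact if_congr eq_comm rfl rfl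
  rw [h10]
  exact hall a
end
end

section
/- Let q ∈ K* with q not a root of unity. Then the K-algebra generated by two elements u, v with relation u·v = q·v·u does not satisfy any polynomial identity (it is not a PI algebra). -/
noncomputable section

open Polynomial

namespace QPlaneAux

variable (K : Type*) [Field K] (q : K)

/-- The operator p(X) ↦ p(qX). -/
def Uop : Module.End K (Polynomial K) :=
  (aeval (C q * X) : Polynomial K →ₐ[K] Polynomial K).toLinearMap

/-- Multiplication by X. -/
def Vop : Module.End K (Polynomial K) := LinearMap.mulLeft K (X : Polynomial K)

lemma rel_UV : Uop K q * Vop K = algebraMap K _ q * (Vop K * Uop K q) := by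
  apply LinearMap.ext
  intro p
  simp [Uop, Vop, Module.End.mul_apply, Module.algebraMap_end_apply,
    Polynomial.smul_eq_C_mul, mul_assoc]

lemma Uop_X_pow (m : ℕ) : Uop K q ((X : K[X]) ^ m) = q ^ m • (X : K[X]) ^ m := by
  simp only [Uop, AlgHom.toLinearMap_apply, map_pow, aeval_X, mul_pow, ← C_pow,
    ← Polynomial.smul_eq_C_mul, _root_.smul_pow]

lemma Uop_pow_X_pow (b m : ℕ) : (Uop K q ^ b) ((X : K[X]) ^ m) = q ^ (b * m) • (X : K[X]) ^ m := by
  induction b with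
  | zero => simp
  | succ n ih =>
    rw [pow_succ, Module.End.mul_apply, Uop_X_pow, map_smul, ih, smul_smul, ← pow_add]
    ring_nf

lemma prod_apply (k : ℕ) (f : Fin k → ℕ) (m : ℕ) :
    ((List.ofFn fun i => Vop K * Uop K q ^ f i).prod) ((X : K[X]) ^ m)
      = q ^ (∑ i, f i * (m + (k - 1 - i.1))) • (X : K[X]) ^ (m + k) := by
  induction k with
  | zero => simp
  | succ n ih =>
    rw [List.ofFn_succ, List.prod_cons, Module.End.mul_apply,
      ih (fun i => f i.succ), map_smul, Module.End.mul_apply, Uop_pow_X_pow,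
      map_smul]
    have hV : Vop K ((X : K[X]) ^ (m + n)) = (X : K[X]) ^ (m + (n + 1)) := by
      show (X : K[X]) * X ^ (m + n) = _
      rw [← pow_succ', Nat.add_assoc]
    rw [hV, smul_smul, ← pow_add]
    congr 1
    rw [Fin.sum_univ_succ]
    simp only [Fin.val_succ, Fin.val_zero, Nat.sub_zero, Nat.add_sub_cancel]
    have h2 : ∀ i : Fin n, n - (i.1 + 1) = n - 1 - i.1 := fun i => by omega
    simp only [h2]
    ring

end QPlaneAux

/-- Relation defining the quantum plane: u*v = q*(v*u). -/
inductive QPlaneRel (K : Type*) [Field K] (q : K) :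
    FreeAlgebra K (Fin 2) → FreeAlgebra K (Fin 2) → Prop
  | rel : QPlaneRel K q (FreeAlgebra.ι K (0 : Fin 2) * FreeAlgebra.ι K 1)
      (algebraMap K _ q * (FreeAlgebra.ι K 1 * FreeAlgebra.ι K 0))

/-- The quantum plane K_q[u,v]. -/
abbrev QPlane (K : Type*) [Field K] (q : K) := RingQuot (QPlaneRel K q)

/-- If q ∈ K* is not a root of unity, the quantum plane K_q[u,v] satisfies no
monic (multilinear) polynomial identity over ℤ. -/
theorem quantum_plane_not_PI (K : Type*) [Field K] (q : K) (hq0 : q ≠ 0)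
    (hq : ∀ n : ℕ, 0 < n → q ^ n ≠ 1) :
    ¬ ∃ k : ℕ, 0 < k ∧ ∃ c : Equiv.Perm (Fin k) → ℤ,
        (∃ σ₀ : Equiv.Perm (Fin k), c σ₀ = 1) ∧
        ∀ r : Fin k → QPlane K q,
          ∑ σ : Equiv.Perm (Fin k), c σ • (List.ofFn fun i => r (σ i)).prod = 0 := by
  rintro ⟨k, hk, c, ⟨σ₀, hσ₀⟩, hid⟩
  classical
  -- injectivity of n ↦ q ^ n
  have hne : ∀ m n : ℕ, m < n → q ^ m ≠ q ^ n := by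
    intro m n hmn h
    have h1 : q ^ m * q ^ (n - m) = q ^ m * 1 := by
      rw [← pow_add, mul_one, show m + (n - m) = n by omega, ← h]
    exact hq (n - m) (by omega) (mul_left_cancel₀ (pow_ne_zero m hq0) h1)
  have hpinj : Function.Injective fun n : ℕ => q ^ n := by
    intro m n h
    rcases lt_trichotomy m n with h' | h' | h'
    · exact absurd h (hne m n h')
    · exact h'
    · exact absurd h.symm (hne n m h')
  -- the representation on K[X]
  let F : FreeAlgebra K (Fin 2) →ₐ[K] Module.End K (Polynomial K) :=
    FreeAlgebra.lift K ![QPlaneAux.Uop K q, QPlaneAux.Vop K]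
  have hF : ∀ ⦃x y⦄, QPlaneRel K q x y → F x = F y := by
    rintro _ _ ⟨⟩
    simp only [F, map_mul, FreeAlgebra.lift_ι_apply, AlgHom.commutes,
      Matrix.cons_val_zero, Matrix.cons_val_one, Matrix.head_cons]
    exact QPlaneAux.rel_UV K q
  let φ : QPlane K q →ₐ[K] Module.End K (Polynomial K) :=
    RingQuot.liftAlgHom K ⟨F, hF⟩
  have hφ : ∀ x, φ (RingQuot.mkAlgHom K (QPlaneRel K q) x) = F x :=
    fun x => RingQuot.liftAlgHom_mkAlgHom_apply K F hF x
  set w : Fin k → ℕ := fun i => k - 1 - i.1 with hw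
  -- key evaluation
  have key : ∀ a : Fin k → ℕ,
      ∑ σ : Equiv.Perm (Fin k), (c σ : K) * q ^ (∑ i, a (σ i) * w i) = 0 := by
    intro a
    have h := hid fun i => RingQuot.mkAlgHom K (QPlaneRel K q)
      (FreeAlgebra.ι K (1 : Fin 2) * FreeAlgebra.ι K (0 : Fin 2) ^ a i)
    have h2 := congrArg φ h
    rw [map_sum, map_zero] at h2
    have h3 : ∀ σ : Equiv.Perm (Fin k),
        φ (c σ • (List.ofFn fun i => RingQuot.mkAlgHom K (QPlaneRel K q)
            (FreeAlgebra.ι K (1 : Fin 2) * FreeAlgebra.ι K (0 : Fin 2) ^ a (σ i))).prod)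
        = c σ • (List.ofFn fun i =>
            QPlaneAux.Vop K * QPlaneAux.Uop K q ^ a (σ i)).prod := by
      intro σ
      rw [map_zsmul, map_list_prod]
      congr 2
      rw [List.map_ofFn]
      congr 1
      funext i
      simp only [Function.comp, hφ, map_mul, map_pow, F, FreeAlgebra.lift_ι_apply,
        Matrix.cons_val_zero, Matrix.cons_val_one, Matrix.head_cons]
    simp only [h3] at h2
    have h5 := congrArg (fun T : Module.End K (Polynomial K) =>
      T ((Polynomial.X : Polynomial K) ^ 0)) h2
    simp only [LinearMap.zero_apply, LinearMap.sum_apply, LinearMap.smul_apply,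
      QPlaneAux.prod_apply, zero_add] at h5
    have h6 : ∀ σ : Equiv.Perm (Fin k),
        (c σ • (q ^ (∑ i, a (σ i) * (k - 1 - i.1)) • (Polynomial.X : Polynomial K) ^ k))
        = ((c σ : K) * q ^ (∑ i, a (σ i) * w i)) • (Polynomial.X : Polynomial K) ^ k := by
      intro σ
      rw [← Int.cast_smul_eq_zsmul K, smul_smul]
    rw [Finset.sum_congr rfl fun σ _ => h6 σ, ← Finset.sum_smul] at h5
    rcases smul_eq_zero.mp h5 with h7 | h7
    · exact h7
    · exact absurd h7 (pow_ne_zero k Polynomial.X_ne_zero)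
  -- characters
  let χ : Equiv.Perm (Fin k) → (Multiplicative (Fin k → ℕ) →* K) := fun σ =>
    { toFun := fun a => q ^ (∑ i, (Multiplicative.toAdd a) (σ i) * w i)
      map_one' := by simp
      map_mul' := by
        intro a b
        simp only [toAdd_mul, Pi.add_apply, add_mul, Finset.sum_add_distrib, pow_add] }
  have hwinj : Function.Injective w := by
    intro i j hij
    have hi := i.2
    have hj := j.2
    have : i.1 = j.1 := by simp only [hw] at hij; omega
    exact Fin.ext this
  have hχinj : Function.Injective χ := by
    intro σ τ h
    have hsum : ∀ (ρ : Equiv.Perm (Fin k)) (t : Fin k),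
        (∑ i, (Pi.single t 1 : Fin k → ℕ) (ρ i) * w i) = w (ρ.symm t) := by
      intro ρ t
      rw [Finset.sum_eq_single (ρ.symm t)]
      · rw [Equiv.apply_symm_apply, Pi.single_eq_same, one_mul]
      · intro b _ hb
        rw [Pi.single_eq_of_ne (by
          intro hbt
          exact hb (by rw [← hbt, Equiv.symm_apply_apply])), zero_mul]
      · intro hmem
        exact absurd (Finset.mem_univ _) hmem
    have hval : ∀ t : Fin k, w (σ.symm t) = w (τ.symm t) := by
      intro t
      have h' : q ^ (∑ i, (Pi.single t 1 : Fin k → ℕ) (σ i) * w i)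
          = q ^ (∑ i, (Pi.single t 1 : Fin k → ℕ) (τ i) * w i) :=
        congrArg (fun f : Multiplicative (Fin k → ℕ) →* K =>
          f (Multiplicative.ofAdd (Pi.single t 1))) h
      rw [hsum σ t, hsum τ t] at h'
      exact hpinj h'
    have hsymm : σ.symm = τ.symm := by
      apply Equiv.ext
      intro t
      exact hwinj (hval t)
    have := congrArg Equiv.symm hsymm
    simpa using this
  have hli : LinearIndependent K fun σ : Equiv.Perm (Fin k) => ⇑(χ σ) :=
    (linearIndependent_monoidHom (Multiplicative (Fin k → ℕ)) K).comp χ hχinj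
  have hzero := Fintype.linearIndependent_iff.mp hli (fun σ => (c σ : K)) ?_ σ₀
  · rw [hσ₀] at hzero
    exact one_ne_zero (by exact_mod_cast hzero)
  · funext a
    simp only [Finset.sum_apply, Pi.smul_apply, smul_eq_mul, Pi.zero_apply]
    exact key (Multiplicative.toAdd a)
end
end

section
/- Let q ∈ K be a primitive l-th root of unity (l ≥ 2) and consider the quantized Weyl algebra A₁^q. Every element of the center, when expanded in the K-basis {y^a x^b : a, b ≥ 0}, has nonzero coefficients only on monomials y^a x^b with l | a and l | b. -/
noncomputable section

namespace WeylAux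

variable {K : Type*} [Field K] (q : K)

abbrev V (K : Type*) [Field K] := (ℕ × ℕ) →₀ K

def qint (n : ℕ) : K := ∑ i ∈ Finset.range n, q ^ i

lemma qint_zero : qint q 0 = 0 := by simp [qint]

lemma qint_succ (n : ℕ) : qint q (n + 1) = q * qint q n + 1 := by
  simp [qint, geom_sum_succ]

lemma qint_succ' (n : ℕ) : qint q (n + 1) = qint q n + q ^ n :=
  Finset.sum_range_succ _ _

def vX (p : ℕ × ℕ) : V K :=
  q ^ p.1 • Finsupp.single (p.1, p.2 + 1) 1 + qint q p.1 • Finsupp.single (p.1 - 1, p.2) 1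

def Xop : V K →ₗ[K] V K := Finsupp.lsum K fun p => LinearMap.toSpanSingleton K (V K) (vX q p)

def Yop (K : Type*) [Field K] : V K →ₗ[K] V K := Finsupp.lmapDomain K K fun p => (p.1 + 1, p.2)

lemma Xop_single (p : ℕ × ℕ) (k : K) : Xop q (Finsupp.single p k) = k • vX q p := by
  simp [Xop, LinearMap.toSpanSingleton_apply]

lemma Yop_single (p : ℕ × ℕ) (k : K) :
    Yop K (Finsupp.single p k) = Finsupp.single (p.1 + 1, p.2) k := by
  simp [Yop, Finsupp.lmapDomain_apply, Finsupp.mapDomain_single]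

lemma rel_End : Xop q * Yop K - algebraMap K (Module.End K (V K)) q * (Yop K * Xop q) = 1 := by
  refine Finsupp.lhom_ext fun p k => ?_
  obtain ⟨a, b⟩ := p
  simp only [LinearMap.sub_apply, Module.End.mul_apply, Module.End.one_apply,
    Module.algebraMap_end_apply, Yop_single, Xop_single, map_smul, map_add, vX]
  cases a with
  | zero =>
      simp [qint_zero, qint_succ, Yop_single, Finsupp.smul_single, smul_smul]
  | succ m =>
      simp only [Yop_single, map_add, map_smul, Finsupp.smul_single, smul_eq_mul, mul_one,
        qint_succ, Nat.add_sub_cancel, Nat.succ_sub_one]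
      ext pt
      simp only [Finsupp.sub_apply, Finsupp.smul_apply, Finsupp.add_apply,
        Finsupp.single_apply, smul_eq_mul]
      split_ifs <;> ring

def phi : Weyl K q →ₐ[K] Module.End K (V K) :=
  RingQuot.liftAlgHom K ⟨FreeAlgebra.lift K ![Xop q, Yop K], by
    rintro _ _ ⟨⟩
    simp only [map_sub, map_mul, map_one, FreeAlgebra.lift_ι_apply, AlgHom.commutes,
      Matrix.cons_val_zero, Matrix.cons_val_one, Matrix.head_cons]
    exact rel_End q⟩

lemma phi_x : phi q (wx K q) = Xop q := by
  rw [wx, phi, RingQuot.liftAlgHom_mkAlgHom_apply, FreeAlgebra.lift_ι_apply]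
  simp

lemma phi_y : phi q (wy K q) = Yop K := by
  rw [wy, phi, RingQuot.liftAlgHom_mkAlgHom_apply, FreeAlgebra.lift_ι_apply]
  simp

lemma Ypow_single (a : ℕ) (p : ℕ × ℕ) (k : K) :
    (Yop K ^ a) (Finsupp.single p k) = Finsupp.single (p.1 + a, p.2) k := by
  induction a with
  | zero => simp
  | succ n ih =>
      rw [pow_succ', Module.End.mul_apply, ih, Yop_single]
      norm_num [Nat.add_assoc]

lemma Xpow_zero_single (b : ℕ) (k₀ : ℕ) (k : K) :
    (Xop q ^ b) (Finsupp.single (0, k₀) k) = Finsupp.single (0, k₀ + b) k := by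
  induction b generalizing k₀ with
  | zero => simp
  | succ n ih =>
      rw [pow_succ, Module.End.mul_apply, Xop_single]
      have : (k : K) • vX q (0, k₀) = Finsupp.single ((0 : ℕ), k₀ + 1) k := by
        simp [vX, qint_zero, Finsupp.smul_single]
      rw [this, ih]
      congr 2
      omega

lemma Xpow_one_single (b : ℕ) (k : K) :
    (Xop q ^ b) (Finsupp.single (1, 0) k) =
      (q ^ b * k) • Finsupp.single (1, b) 1 + (qint q b * k) • Finsupp.single (0, b - 1) 1 := by
  induction b with
  | zero => simp [qint_zero, Finsupp.smul_single]
  | succ n ih =>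
      rw [pow_succ', Module.End.mul_apply, ih, map_add, map_smul, map_smul,
        Xop_single, Xop_single, one_smul, one_smul]
      cases n with
      | zero =>
          simp only [vX, qint_zero, qint_succ, pow_zero]
          ext pt
          simp only [Finsupp.add_apply, Finsupp.smul_apply, Finsupp.single_apply, smul_eq_mul]
          split_ifs <;> ring
      | succ m =>
          simp only [vX, qint_succ']
          have h1 : (m + 1 : ℕ) - 1 + 1 = m + 1 := by omega
          have h2 : (m + 1 + 1 : ℕ) - 1 = m + 1 := by omega
          ext pt
          simp only [Finsupp.add_apply, Finsupp.smul_apply, Finsupp.single_apply, smul_eq_mul,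
            h1, h2, qint_zero, qint_succ']
          split_ifs <;> ring_nf


lemma mono_e00 (a b : ℕ) :
    (Yop K ^ a * Xop q ^ b) (Finsupp.single ((0 : ℕ), (0 : ℕ)) (1 : K)) =
      Finsupp.single (a, b) 1 := by
  rw [Module.End.mul_apply, Xpow_zero_single, Ypow_single]
  norm_num

lemma mono_e01 (a b : ℕ) :
    (Yop K ^ a * Xop q ^ b) (Finsupp.single ((0 : ℕ), (1 : ℕ)) (1 : K)) =
      Finsupp.single (a, b + 1) 1 := by
  rw [Module.End.mul_apply, Xpow_zero_single, Ypow_single]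
  norm_num [Nat.add_comm]

lemma mono_e10 (a b : ℕ) :
    (Yop K ^ a * Xop q ^ b) (Finsupp.single ((1 : ℕ), (0 : ℕ)) (1 : K)) =
      q ^ b • Finsupp.single (a + 1, b) 1 + qint q b • Finsupp.single (a, b - 1) 1 := by
  rw [Module.End.mul_apply, Xpow_one_single, map_add, map_smul, map_smul, Ypow_single, Ypow_single]
  simp [mul_one, Nat.add_comm]

lemma eval_sum (s : Finset (ℕ × ℕ)) (f : (ℕ × ℕ) → K) (σ : (ℕ × ℕ) → ℕ × ℕ) (x p₀ : ℕ × ℕ)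
    (h1 : σ p₀ = x) (h2 : ∀ p ∈ s, σ p = x → p ≠ p₀ → f p = 0) (h3 : p₀ ∉ s → f p₀ = 0) :
    (∑ p ∈ s, Finsupp.single (σ p) (f p)) x = f p₀ := by
  classical
  rw [Finsupp.finset_sum_apply, Finset.sum_eq_single p₀]
  · rw [Finsupp.single_apply, if_pos h1]
  · intro p hp hne
    rw [Finsupp.single_apply]
    split_ifs with h
    · exact h2 p hp h hne
    · rfl
  · intro hp
    rw [Finsupp.single_apply, if_pos h1]
    exact h3 hp

end WeylAux

open WeylAux

/-- If q is a primitive l-th root of unity (l ≥ 2), then every central element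
of A₁^q, expanded in the K-basis {y^a x^b}, has nonzero coefficients only on
monomials y^a x^b with l ∣ a and l ∣ b. -/
theorem weyl_center_support (K : Type*) [Field K] (q : K) (l : ℕ) (hl : 2 ≤ l)
    (hq : IsPrimitiveRoot q l) :
    ∀ z ∈ Subalgebra.center K (Weyl K q),
      ∀ c : (ℕ × ℕ) →₀ K,
        z = c.sum (fun p k => k • (wy K q ^ p.1 * wx K q ^ p.2)) →
        ∀ p ∈ c.support, l ∣ p.1 ∧ l ∣ p.2 := by
  classical
  intro z hz c hzc p₁ hp₁
  rw [Subalgebra.mem_center_iff] at hz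
  set e00 : V K := Finsupp.single ((0 : ℕ), (0 : ℕ)) (1 : K) with he00
  have hphiz : ∀ v : V K, phi q z v =
      ∑ p ∈ c.support, c p • ((Yop K ^ p.1 * Xop q ^ p.2) v) := by
    intro v
    rw [hzc, Finsupp.sum, map_sum, LinearMap.sum_apply]
    refine Finset.sum_congr rfl fun p _ => ?_
    rw [map_smul, map_mul, map_pow, map_pow, phi_x, phi_y, LinearMap.smul_apply]
  have hz00 : phi q z e00 = ∑ p ∈ c.support, Finsupp.single p (c p) := by
    rw [hphiz]
    refine Finset.sum_congr rfl fun p _ => ?_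
    rw [he00, mono_e00, Finsupp.smul_single, smul_eq_mul, mul_one]
  -- equation from commuting with x
  have hxz := hz (wx K q)
  have hx := congrArg (fun u => phi q u e00) hxz
  simp only [map_mul, Module.End.mul_apply] at hx
  rw [phi_x] at hx
  have hXe00 : Xop q e00 = Finsupp.single ((0 : ℕ), (1 : ℕ)) (1 : K) := by
    rw [he00, Xop_single]
    simp [vX, qint_zero]
  rw [hXe00, hz00, hphiz, map_sum] at hx
  rw [Finset.sum_congr rfl (fun p (_ : p ∈ c.support) =>
    show Xop q (Finsupp.single p (c p)) =
        Finsupp.single (p.1, p.2 + 1) (c p * q ^ p.1) +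
          Finsupp.single (p.1 - 1, p.2) (c p * qint q p.1) by
      rw [Xop_single]
      simp [vX, smul_add, smul_smul, Finsupp.smul_single])] at hx
  rw [Finset.sum_add_distrib] at hx
  rw [Finset.sum_congr rfl (fun p (_ : p ∈ c.support) =>
    show c p • ((Yop K ^ p.1 * Xop q ^ p.2) (Finsupp.single ((0:ℕ),(1:ℕ)) (1:K))) =
        Finsupp.single (p.1, p.2 + 1) (c p) by
      rw [mono_e01, Finsupp.smul_single, smul_eq_mul, mul_one])] at hx
  have E1 : ∀ A B : ℕ, c (A, B) * q ^ A + c (A+1, B+1) * qint q (A+1) = c (A, B) := by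
    intro A B
    have h := congrArg (fun g : V K => g (A, B+1)) hx
    simp only [Finsupp.add_apply] at h
    rw [eval_sum c.support (fun p => c p * q ^ p.1) (fun p => (p.1, p.2 + 1)) (A, B+1) (A, B)
        rfl
        (fun p _ hσ hne => by
          exfalso; apply hne; obtain ⟨a, b⟩ := p
          simp only [Prod.mk.injEq] at hσ ⊢; omega)
        (fun hni => by simp [Finsupp.notMem_support_iff.mp hni]),
      eval_sum c.support (fun p => c p * qint q p.1) (fun p => (p.1 - 1, p.2)) (A, B+1) (A+1, B+1)
        (by simp)
        (fun p _ hσ hne => by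
          obtain ⟨a, b⟩ := p
          rw [Prod.mk.injEq] at hσ
          obtain ⟨h1', h2'⟩ := hσ
          by_cases hA0 : a = A + 1
          · exact absurd (by rw [Prod.mk.injEq]; exact ⟨hA0, h2'⟩) hne
          · have ha : a = 0 := by omega
            show c (a, b) * qint q a = 0
            rw [ha, qint_zero, mul_zero])
        (fun hni => by simp [Finsupp.notMem_support_iff.mp hni]),
      eval_sum c.support (fun p => c p) (fun p => (p.1, p.2 + 1)) (A, B+1) (A, B)
        rfl
        (fun p _ hσ hne => by
          exfalso; apply hne; obtain ⟨a, b⟩ := p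
          simp only [Prod.mk.injEq] at hσ ⊢; omega)
        (fun hni => Finsupp.notMem_support_iff.mp hni)] at h
    exact h
  -- equation from commuting with y
  have hyz := hz (wy K q)
  have hy := congrArg (fun u => phi q u e00) hyz
  simp only [map_mul, Module.End.mul_apply] at hy
  rw [phi_y] at hy
  have hYe00 : Yop K e00 = Finsupp.single ((1 : ℕ), (0 : ℕ)) (1 : K) := by
    rw [he00, Yop_single]
  rw [hYe00, hz00, hphiz, map_sum] at hy
  rw [Finset.sum_congr rfl (fun p (_ : p ∈ c.support) =>
    show Yop K (Finsupp.single p (c p)) = Finsupp.single (p.1 + 1, p.2) (c p) by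
      rw [Yop_single])] at hy
  rw [Finset.sum_congr rfl (fun p (_ : p ∈ c.support) =>
    show c p • ((Yop K ^ p.1 * Xop q ^ p.2) (Finsupp.single ((1:ℕ),(0:ℕ)) (1:K))) =
        Finsupp.single (p.1 + 1, p.2) (c p * q ^ p.2) +
          Finsupp.single (p.1, p.2 - 1) (c p * qint q p.2) by
      rw [mono_e10]
      simp [smul_add, smul_smul, Finsupp.smul_single])] at hy
  rw [Finset.sum_add_distrib] at hy
  have E2 : ∀ A B : ℕ, c (A, B) = c (A, B) * q ^ B + c (A+1, B+1) * qint q (B+1) := by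
    intro A B
    have h := congrArg (fun g : V K => g (A+1, B)) hy
    simp only [Finsupp.add_apply] at h
    rw [eval_sum c.support (fun p => c p) (fun p => (p.1 + 1, p.2)) (A+1, B) (A, B)
        rfl
        (fun p _ hσ hne => by
          exfalso; apply hne; obtain ⟨a, b⟩ := p
          simp only [Prod.mk.injEq] at hσ ⊢; omega)
        (fun hni => Finsupp.notMem_support_iff.mp hni),
      eval_sum c.support (fun p => c p * q ^ p.2) (fun p => (p.1 + 1, p.2)) (A+1, B) (A, B)
        rfl
        (fun p _ hσ hne => by
          exfalso; apply hne; obtain ⟨a, b⟩ := p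
          simp only [Prod.mk.injEq] at hσ ⊢; omega)
        (fun hni => by simp [Finsupp.notMem_support_iff.mp hni]),
      eval_sum c.support (fun p => c p * qint q p.2) (fun p => (p.1, p.2 - 1)) (A+1, B) (A+1, B+1)
        (by simp)
        (fun p _ hσ hne => by
          obtain ⟨a, b⟩ := p
          rw [Prod.mk.injEq] at hσ
          obtain ⟨h1', h2'⟩ := hσ
          by_cases hB0 : b = B + 1
          · exact absurd (by rw [Prod.mk.injEq]; exact ⟨h1', hB0⟩) hne
          · have hb : b = 0 := by omega
            show c (a, b) * qint q b = 0
            rw [hb, qint_zero, mul_zero])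
        (fun hni => by simp [Finsupp.notMem_support_iff.mp hni])] at h
    exact h
  -- arithmetic facts about q
  have hq1 : q ≠ 1 := hq.ne_one hl
  have hqint0 : ∀ n : ℕ, qint q n = 0 ↔ l ∣ n := by
    intro n
    have hg : qint q n * (q - 1) = q ^ n - 1 := geom_sum_mul q n
    constructor
    · intro h
      have h2 : q ^ n - 1 = 0 := by rw [← hg, h, zero_mul]
      exact (hq.pow_eq_one_iff_dvd n).mp (sub_eq_zero.mp h2)
    · intro h
      have h1 : q ^ n = 1 := (hq.pow_eq_one_iff_dvd n).mpr h
      have h2 : qint q n * (q - 1) = 0 := by rw [hg, h1, sub_self]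
      rcases mul_eq_zero.mp h2 with h' | h'
      · exact h'
      · exact absurd (sub_eq_zero.mp h') hq1
  -- the inductive step
  have step : ∀ A B : ℕ, c (A, B) ≠ 0 → (¬ l ∣ A ∨ ¬ l ∣ B) →
      c (A+1, B+1) ≠ 0 ∧ (¬ l ∣ (A+1) ∨ ¬ l ∣ (B+1)) := by
    intro A B hc hnd
    rcases hnd with hA | hB
    · have hqa : q ^ A ≠ 1 := fun h => hA ((hq.pow_eq_one_iff_dvd A).mp h)
      have h := E1 A B
      have hne : c (A+1, B+1) * qint q (A+1) ≠ 0 := by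
        intro h0
        rw [h0, add_zero] at h
        exact hqa (mul_left_cancel₀ hc (h.trans (mul_one (c (A, B))).symm))
      exact ⟨fun h0 => hne (by rw [h0, zero_mul]),
        Or.inl fun hd => hne (by rw [(hqint0 _).mpr hd, mul_zero])⟩
    · have hqb : q ^ B ≠ 1 := fun h => hB ((hq.pow_eq_one_iff_dvd B).mp h)
      have h := (E2 A B).symm
      have hne : c (A+1, B+1) * qint q (B+1) ≠ 0 := by
        intro h0
        rw [h0, add_zero] at h
        exact hqb (mul_left_cancel₀ hc (h.trans (mul_one (c (A, B))).symm))
      exact ⟨fun h0 => hne (by rw [h0, zero_mul]),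
        Or.inr fun hd => hne (by rw [(hqint0 _).mpr hd, mul_zero])⟩
  -- conclude
  by_contra hcon
  have hnd0 : ¬ l ∣ p₁.1 ∨ ¬ l ∣ p₁.2 := not_and_or.mp hcon
  have hc0 : c p₁ ≠ 0 := Finsupp.mem_support_iff.mp hp₁
  have iter : ∀ k : ℕ, c (p₁.1 + k, p₁.2 + k) ≠ 0 ∧ (¬ l ∣ (p₁.1 + k) ∨ ¬ l ∣ (p₁.2 + k)) := by
    intro k
    induction k with
    | zero => simpa using ⟨hc0, hnd0⟩
    | succ n ih => exact step _ _ ih.1 ih.2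
  set N := c.support.sup (fun p : ℕ × ℕ => p.1) with hN
  have h1 := (iter (N+1)).1
  have h2 : (p₁.1 + (N+1), p₁.2 + (N+1)) ∈ c.support := Finsupp.mem_support_iff.mpr h1
  have h3 : p₁.1 + (N+1) ≤ N := Finset.le_sup (f := fun p : ℕ × ℕ => p.1) h2
  omega
end
end
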